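/- Chernoff variant: under the same assumptions as the pointwise Lipschitzness of conditional accuracy, |P(H(X)=Y | E) − P(H'(X)=Y | E)| ≤ inf over t ≥ 0 of exp(t‖h−h'‖) · E[exp(−t·|ρ(h,X,Y)|/L(X,Y)) | E]. -/

import Mathlib

open MeasureTheory ProbabilityTheory Finset

/-!
A prediction of `h` and one of `h'` can only disagree at a sample where the margins
`ρ h` and `ρ h'` have opposite signs; the Lipschitz bound then forces
`|ρ h| / L ≤ dist h h'`. So the two conditional accuracies differ by at most the conditional
probability of that event, and the Chernoff bound for the nonnegative variable `|ρ h| / L`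
bounds this probability for every `t ≥ 0`.
-/

theorem abs_le_abs_sub_of_mul_nonpos {a b : ℝ} (h : a * b ≤ 0) : |a| ≤ |a - b| :=
  sq_le_sq.1 (by nlinarith [sq_nonneg b])

theorem abs_div_le_of_mul_nonpos {a b L d : ℝ} (hL : 0 < L) (hab : |a - b| ≤ L * d)
    (h : a * b ≤ 0) : |a| / L ≤ d :=
  (div_le_iff₀ hL).2 ((abs_le_abs_sub_of_mul_nonpos h).trans (mul_comm L d ▸ hab))

namespace MeasureTheory

variable {Ω : Type*} {m : MeasurableSpace Ω} {μ : Measure Ω} [IsFiniteMeasure μ]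

theorem abs_measureReal_sub_le_of_sdiff_subset {s t u : Set Ω} (hst : s \ t ⊆ u)
    (hts : t \ s ⊆ u) : |μ.real s - μ.real t| ≤ μ.real u :=
  abs_sub_le_iff.2
    ⟨(le_measureReal_sdiff ..).trans (measureReal_mono hst),
      (le_measureReal_sdiff ..).trans (measureReal_mono hts)⟩

theorem integrable_exp_neg_mul_of_nonneg {Z : Ω → ℝ} (hZ : ∀ ω, 0 ≤ Z ω)
    (hZm : AEMeasurable Z μ) {t : ℝ} (ht : 0 ≤ t) :
    Integrable (fun ω => Real.exp (-t * Z ω)) μ := by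
  refine (integrable_const (1 : ℝ)).mono'
    (Real.measurable_exp.comp_aemeasurable (hZm.const_mul (-t))).aestronglyMeasurable ?_
  refine ae_of_all _ fun ω => ?_
  rw [Real.norm_eq_abs, abs_of_pos (Real.exp_pos _), Real.exp_le_one_iff, neg_mul]
  exact neg_nonpos.2 (mul_nonneg ht (hZ ω))

theorem measureReal_le_le_exp_mul_integral_exp_neg_mul {Z : Ω → ℝ} (hZ : ∀ ω, 0 ≤ Z ω)
    (hZm : AEMeasurable Z μ) {t : ℝ} (ht : 0 ≤ t) (a : ℝ) :
    μ.real {ω | Z ω ≤ a} ≤ Real.exp (t * a) * ∫ ω, Real.exp (-t * Z ω) ∂μ := by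
  simpa only [neg_neg, mgf] using
    measure_le_le_exp_mul_mgf a (neg_nonpos.2 ht) (integrable_exp_neg_mul_of_nonneg hZ hZm ht)

end MeasureTheory

theorem stmt5_general {Ω 𝓗 𝓧 𝓨 : Type*} [MeasurableSpace Ω] [PseudoMetricSpace 𝓗]
    (ρ : 𝓗 → 𝓧 → 𝓨 → ℝ)
    (L : 𝓧 → 𝓨 → ℝ) (hL : ∀ x y, 0 < L x y)
    (hLip : ∀ h h' : 𝓗, ∀ x y, |ρ h x y - ρ h' x y| ≤ L x y * dist h h')
    (μ : Measure Ω)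
    (Xv : Ω → 𝓧) (Yv : Ω → 𝓨)
    (h h' : 𝓗)
    (hmeas : Measurable fun ω => |ρ h (Xv ω) (Yv ω)| / L (Xv ω) (Yv ω))
    (E : Set Ω) :
    |((μ[|E]) {ω | 0 ≤ ρ h (Xv ω) (Yv ω)}).toReal -
        ((μ[|E]) {ω | 0 < ρ h' (Xv ω) (Yv ω)}).toReal| ≤
      ⨅ t : Set.Ici (0 : ℝ),
        Real.exp ((t : ℝ) * dist h h') *
          ∫ ω, Real.exp (-(t : ℝ) * |ρ h (Xv ω) (Yv ω)| / L (Xv ω) (Yv ω)) ∂(μ[|E]) := by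
  have hdisagree : ∀ ω, ρ h (Xv ω) (Yv ω) * ρ h' (Xv ω) (Yv ω) ≤ 0 →
      |ρ h (Xv ω) (Yv ω)| / L (Xv ω) (Yv ω) ≤ dist h h' := fun ω =>
    abs_div_le_of_mul_nonpos (hL _ _) (hLip _ _ _ _)
  refine (abs_measureReal_sub_le_of_sdiff_subset (μ := μ[|E])
    (u := {ω | |ρ h (Xv ω) (Yv ω)| / L (Xv ω) (Yv ω) ≤ dist h h'}) ?_ ?_).trans
    (le_ciInf fun ⟨t, ht⟩ => ?_)
  · rintro ω ⟨hpos, hnpos'⟩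
    exact hdisagree ω (mul_nonpos_of_nonneg_of_nonpos hpos (not_lt.1 hnpos'))
  · rintro ω ⟨hpos', hneg⟩
    exact hdisagree ω (mul_neg_of_neg_of_pos (not_le.1 hneg) hpos').le
  simpa only [mul_div_assoc] using
    measureReal_le_le_exp_mul_integral_exp_neg_mul
      (fun ω => div_nonneg (abs_nonneg _) (hL _ _).le) hmeas.aemeasurable ht (dist h h')

/-- Chernoff variant of the pointwise Lipschitzness of conditional accuracy:
`|P(H(X)=Y | E) − P(H'(X)=Y | E)| ≤
  inf_{t ≥ 0} exp(t·dist h h') · E[exp(−t·|ρ(h,X,Y)|/L(X,Y)) | E]`. -/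
theorem stmt5 {Ω 𝓗 𝓧 𝓨 : Type*} [MeasurableSpace Ω] [PseudoMetricSpace 𝓗]
    [Fintype 𝓨] [DecidableEq 𝓨] (hcard : 2 ≤ Fintype.card 𝓨)
    (score : 𝓗 → 𝓧 → 𝓨 → ℝ)
    (hne : ∀ y : 𝓨, (Finset.univ.erase y).Nonempty)
    (ρ : 𝓗 → 𝓧 → 𝓨 → ℝ)
    (hρ : ∀ h x y, ρ h x y =
      score h x y - (Finset.univ.erase y).sup' (hne y) (fun y' => score h x y'))
    (L : 𝓧 → 𝓨 → ℝ) (hL : ∀ x y, 0 < L x y)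
    (hLip : ∀ h h' : 𝓗, ∀ x y, |ρ h x y - ρ h' x y| ≤ L x y * dist h h')
    (μ : Measure Ω) [IsProbabilityMeasure μ]
    (Xv : Ω → 𝓧) (Yv : Ω → 𝓨)
    (h h' : 𝓗)
    (hmeas : Measurable fun ω => |ρ h (Xv ω) (Yv ω)| / L (Xv ω) (Yv ω))
    (E : Set Ω) (hE : MeasurableSet E) (hEpos : 0 < μ E) :
    |((μ[|E]) {ω | 0 ≤ ρ h (Xv ω) (Yv ω)}).toReal -
        ((μ[|E]) {ω | 0 < ρ h' (Xv ω) (Yv ω)}).toReal| ≤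
      ⨅ t : Set.Ici (0 : ℝ),
        Real.exp ((t : ℝ) * dist h h') *
          ∫ ω, Real.exp (-(t : ℝ) * |ρ h (Xv ω) (Yv ω)| / L (Xv ω) (Yv ω)) ∂(μ[|E]) :=
  stmt5_general ρ L hL hLip μ Xv Yv h h' hmeas E
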